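/- Let n be a positive integer, F = ℤ/2ℤ, and A_n the quotient of the polynomial ring F[x₁, …, xₙ] by the ideal generated by x₁², …, xₙ². For every polynomial p ∈ F[x₁, …, xₙ], the image in A_n of (x₁ ⋯ xₙ)·p equals the constant coefficient of p (the coefficient of the monomial 1) times the image in A_n of x₁ ⋯ xₙ. -/
import Mathlib


open MvPolynomial

theorem stmt_3 (n : ℕ) (hn : 0 < n) (p : MvPolynomial (Fin n) (ZMod 2)) :
    Ideal.Quotient.mk
        (Ideal.span {q : MvPolynomial (Fin n) (ZMod 2) | ∃ i : Fin n, q = X i ^ 2})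
        ((∏ i : Fin n, X i) * p)
      = MvPolynomial.coeff 0 p •
        Ideal.Quotient.mk
          (Ideal.span {q : MvPolynomial (Fin n) (ZMod 2) | ∃ i : Fin n, q = X i ^ 2})
          (∏ i : Fin n, X i) := by
  set I := Ideal.span {q : MvPolynomial (Fin n) (ZMod 2) | ∃ i : Fin n, q = X i ^ 2} with hI
  induction p using MvPolynomial.induction_on with
  | C a =>
    rw [MvPolynomial.coeff_C, if_pos rfl, mul_comm, ← MvPolynomial.smul_eq_C_mul,
      ← Ideal.Quotient.mkₐ_eq_mk (ZMod 2), map_smul]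
  | add p q hp hq =>
    rw [mul_add, map_add, hp, hq, MvPolynomial.coeff_add, add_smul]
  | mul_X p i hp =>
    have hmem : ((∏ j : Fin n, X j) * (p * X i) : MvPolynomial (Fin n) (ZMod 2)) ∈ I := by
      obtain ⟨c, hc⟩ : (X i : MvPolynomial (Fin n) (ZMod 2)) ∣ ∏ j : Fin n, X j :=
        Finset.dvd_prod_of_mem _ (Finset.mem_univ i)
      have : ((∏ j : Fin n, X j) * (p * X i) : MvPolynomial (Fin n) (ZMod 2))
          = X i ^ 2 * (c * p) := by rw [hc]; ring
      rw [this]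
      exact Ideal.mul_mem_right _ _ (Ideal.subset_span ⟨i, rfl⟩)
    have hc0 : MvPolynomial.coeff 0 (p * X i) = 0 := by
      have : constantCoeff (p * X i) = constantCoeff p * constantCoeff (X i) := map_mul _ _ _
      simpa [MvPolynomial.constantCoeff_eq, MvPolynomial.constantCoeff_X] using this
    rw [Ideal.Quotient.eq_zero_iff_mem.2 hmem, hc0, zero_smul]
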